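/- Let X be a compact metric space and f : X → X a positively expansive homeomorphism. Then the diagonal Δ = {(x,x) : x ∈ X} is a repeller for f × f : X × X → X × X; that is, there exists a compact neighborhood N of Δ with (f×f)⁻¹(N) ⊆ int(N) and such that the maximal invariant subset of N equals Δ. -/

import Mathlib

/-! A positively expansive homeomorphism `f` of a compact metric space forces the space to be
finite. Uniform expansivity shows that backward iterates of `δ`-close points stay `ρ`-close, and
then that a high backward iterate `f⁻ᵀ` shrinks every `δ`-ball below any prescribed size. Since
`f⁻ᵀ` is onto, a fixed finite cover by `δ/2`-balls is carried to a cover of the space by equally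
many arbitrarily small sets, which bounds the number of points. On a finite space the diagonal is
clopen and invariant, so `N = Δ` itself is an isolating neighbourhood with `F⁻¹ N ⊆ int N`. -/

open Function Metric Filter Uniformity

def PositivelyExpansiveWith {X : Type*} [Dist X] (g : X → X) (c : ℝ) : Prop :=
  ∀ x y, x ≠ y → ∃ n : ℕ, c < dist (g^[n] x) (g^[n] y)

theorem Function.RightInverse.iterate_apply_iterate_of_le {α : Type*} {f g : α → α}
    (hgf : RightInverse g f) {t n : ℕ} (h : t ≤ n) (x : α) : f^[t] (g^[n] x) = g^[n - t] x := by
  conv_lhs => rw [← Nat.add_sub_cancel' h, iterate_add_apply]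
  exact hgf.iterate t _

section Finiteness

variable {X : Type*} [MetricSpace X]

theorem Finset.exists_pos_le_dist (S : Finset X) :
    ∃ ε > 0, ∀ x ∈ S, ∀ y ∈ S, x ≠ y → ε ≤ dist x y := by
  rcases S.offDiag.eq_empty_or_nonempty with h | h
  · refine ⟨1, one_pos, fun x hx y hy hxy => ?_⟩
    have : (x, y) ∈ S.offDiag := Finset.mem_offDiag.2 ⟨hx, hy, hxy⟩
    simp [h] at this
  · obtain ⟨p, hp, hmin⟩ := S.offDiag.exists_min_image (fun p => dist p.1 p.2) h
    exact ⟨_, dist_pos.2 (Finset.mem_offDiag.1 hp).2.2,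
      fun x hx y hy hxy => hmin (x, y) (Finset.mem_offDiag.2 ⟨hx, hy, hxy⟩)⟩

theorem finite_of_forall_exists_surjective_dist_lt [CompactSpace X] {δ : ℝ} (hδ : 0 < δ)
    (h : ∀ α > 0, ∃ g : X → X, Surjective g ∧ ∀ x y, dist x y < δ → dist (g x) (g y) < α) :
    Finite X := by
  obtain ⟨t, -, htf, hcover⟩ :=
    finite_cover_balls_of_compact (isCompact_univ (X := X)) (half_pos hδ)
  have hcard (S : Finset X) : S.card ≤ htf.toFinset.card := by
    obtain ⟨ε, hε, hsep⟩ := S.exists_pos_le_dist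
    obtain ⟨g, hg, hshrink⟩ := h ε hε
    have hcenter (s : X) : ∃ z ∈ t, surjInv hg s ∈ ball z (δ / 2) := by
      simpa using hcover (Set.mem_univ (surjInv hg s))
    choose z hzt hz using hcenter
    refine Finset.card_le_card_of_injOn z (fun s _ => by simpa using hzt s)
      fun s hs s' hs' hzz => by_contra fun hne => ?_
    have hclose : dist (surjInv hg s) (surjInv hg s') < δ :=
      calc dist (surjInv hg s) (surjInv hg s')
          ≤ dist (surjInv hg s) (z s) + dist (surjInv hg s') (z s) := dist_triangle_right _ _ _
        _ < δ / 2 + δ / 2 := add_lt_add (hz s) (hzz ▸ hz s')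
        _ = δ := add_halves δ
    have := hshrink _ _ hclose
    rw [surjInv_eq hg, surjInv_eq hg] at this
    exact (hsep s hs s' hs' hne).not_gt this
  by_contra hinf
  rw [not_finite_iff_infinite] at hinf
  obtain ⟨S, hS⟩ := Infinite.exists_subset_card_eq X (htf.toFinset.card + 1)
  have := hcard S
  omega

end Finiteness

section

variable {X : Type*} [MetricSpace X] [CompactSpace X]

theorem Continuous.exists_pos_forall_iterate_dist_lt {g : X → X} (hg : Continuous g) {c : ℝ}
    (hc : 0 < c) (M : ℕ) :
    ∃ δ > 0, ∀ t ≤ M, ∀ x y, dist x y < δ → dist (g^[t] x) (g^[t] y) < c := by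
  have hunif (t : ℕ) : ∀ᶠ p in 𝓤 X, dist (g^[t] p.1) (g^[t] p.2) < c :=
    CompactSpace.uniformContinuous_of_continuous (hg.iterate t) (dist_mem_uniformity hc)
  obtain ⟨δ, hδ, hδc⟩ := mem_uniformity_dist.1
    ((eventually_all_finset (Finset.range (M + 1))).2 fun t _ => hunif t)
  exact ⟨δ, hδ, fun t ht x y hxy => hδc hxy t (Finset.mem_range.2 (Nat.lt_succ_of_le ht))⟩

namespace PositivelyExpansiveWith

variable {g : X → X} {c : ℝ}

theorem exists_dist_lt_of_forall_iterate_dist_le (hexp : PositivelyExpansiveWith g c)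
    (hg : Continuous g) (hinj : Injective g) {α : ℝ} (hα : 0 < α) :
    ∃ M : ℕ, ∀ x y, (∀ t ∈ Finset.Icc 1 M, dist (g^[t] x) (g^[t] y) ≤ c) → dist x y < α := by
  by_contra! h
  set V : ℕ → Set (X × X) := fun M =>
    {p | α ≤ dist p.1 p.2} ∩ ⋂ t ∈ Finset.Icc 1 M, {p | dist (g^[t] p.1) (g^[t] p.2) ≤ c}
  have hclosed (M : ℕ) : IsClosed (V M) :=
    (isClosed_le continuous_const (continuous_fst.dist continuous_snd)).inter <|
      isClosed_biInter fun t _ => isClosed_le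
        (((hg.iterate t).comp continuous_fst).dist ((hg.iterate t).comp continuous_snd))
        continuous_const
  have hanti (M : ℕ) : V (M + 1) ⊆ V M := by
    refine Set.inter_subset_inter_right _ (Set.biInter_mono ?_ fun _ _ => subset_rfl)
    exact Finset.coe_subset.2 (Finset.Icc_subset_Icc_right M.le_succ)
  have hne (M : ℕ) : (V M).Nonempty := by
    obtain ⟨x, y, hclose, hfar⟩ := h M
    exact ⟨(x, y), hfar, Set.mem_iInter₂.2 hclose⟩
  obtain ⟨⟨x, y⟩, hp⟩ := IsCompact.nonempty_iInter_of_sequence_nonempty_isCompact_isClosed V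
    hanti hne (hclosed 0).isCompact hclosed
  replace hp (M : ℕ) : α ≤ dist x y ∧ ∀ t ∈ Finset.Icc 1 M, dist (g^[t] x) (g^[t] y) ≤ c := by
    simpa [V] using Set.mem_iInter.1 hp M
  have hxy : x ≠ y := dist_pos.1 (hα.trans_le (hp 0).1)
  obtain ⟨n, hn⟩ := hexp (g x) (g y) (hinj.ne hxy)
  have := (hp (n + 1)).2 (n + 1) (Finset.mem_Icc.2 ⟨Nat.le_add_left 1 n, le_rfl⟩)
  rw [iterate_succ_apply, iterate_succ_apply] at this
  linarith

theorem exists_pos_forall_iterate_symm_dist_le {f : X ≃ₜ X} (hexp : PositivelyExpansiveWith f c)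
    (hc : 0 < c) : ∃ δ > 0, ∀ x y, dist x y < δ → ∀ n, dist (f.symm^[n] x) (f.symm^[n] y) ≤ c := by
  obtain ⟨M, hM⟩ := hexp.exists_dist_lt_of_forall_iterate_dist_le f.continuous f.injective hc
  obtain ⟨δ, hδ, hδc⟩ := f.symm.continuous.exists_pos_forall_iterate_dist_lt hc M
  refine ⟨δ, hδ, fun x y hxy n => ?_⟩
  induction n using Nat.strong_induction_on with
  | _ n ih =>
    rcases le_or_gt n M with hnM | hMn
    · exact (hδc n hnM x y hxy).le
    · -- for `1 ≤ t ≤ M < n`, `fᵗ (f⁻ⁿ x) = f⁻⁽ⁿ⁻ᵗ⁾ x` is an earlier backward iterate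
      refine (hM _ _ fun t ht => ?_).le
      obtain ⟨ht1, htM⟩ := Finset.mem_Icc.1 ht
      have hcancel := RightInverse.iterate_apply_iterate_of_le f.apply_symm_apply (htM.trans hMn.le)
      rw [hcancel, hcancel]
      exact ih (n - t) (by omega)

theorem exists_pos_forall_exists_iterate_symm_dist_lt {f : X ≃ₜ X}
    (hexp : PositivelyExpansiveWith f c) (hc : 0 < c) :
    ∃ δ > 0, ∀ α > 0, ∃ T, ∀ x y, dist x y < δ → dist (f.symm^[T] x) (f.symm^[T] y) < α := by
  obtain ⟨δ, hδ, hstable⟩ := hexp.exists_pos_forall_iterate_symm_dist_le hc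
  refine ⟨δ, hδ, fun α hα => ?_⟩
  obtain ⟨M, hM⟩ := hexp.exists_dist_lt_of_forall_iterate_dist_le f.continuous f.injective hα
  refine ⟨M, fun x y hxy => hM _ _ fun t ht => ?_⟩
  have hcancel :=
    RightInverse.iterate_apply_iterate_of_le f.apply_symm_apply (Finset.mem_Icc.1 ht).2
  rw [hcancel, hcancel]
  exact hstable x y hxy _

theorem finite {f : X ≃ₜ X} (hexp : PositivelyExpansiveWith f c) (hc : 0 < c) : Finite X := by
  obtain ⟨δ, hδ, hshrink⟩ := hexp.exists_pos_forall_exists_iterate_symm_dist_lt hc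
  refine finite_of_forall_exists_surjective_dist_lt hδ fun α hα => ?_
  obtain ⟨T, hT⟩ := hshrink α hα
  exact ⟨_, f.symm.surjective.iterate T, hT⟩

end PositivelyExpansiveWith

end

theorem stmt5 {X : Type*} [MetricSpace X] [CompactSpace X] (f : X ≃ₜ X)
    (hexp : ∃ ρ > (0:ℝ), ∀ x y : X, x ≠ y →
      ∃ n : ℕ, ρ < dist ((⇑f)^[n] x) ((⇑f)^[n] y)) :
    ∃ N : Set (X × X), IsCompact N ∧ N ∈ nhdsSet {p : X × X | p.1 = p.2} ∧
      (⇑(f.prodCongr f)) ⁻¹' N ⊆ interior N ∧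
      {p : X × X | ∀ n : ℕ, (⇑(f.prodCongr f))^[n] p ∈ N ∧
        (⇑(f.prodCongr f).symm)^[n] p ∈ N} = {p : X × X | p.1 = p.2} := by
  obtain ⟨ρ, hρ, hexp⟩ := hexp
  have : Finite X := PositivelyExpansiveWith.finite hexp hρ
  have : DiscreteTopology X := Finite.instDiscreteTopology
  have hopen : IsOpen (Set.diagonal X) := isOpen_discrete _
  refine ⟨Set.diagonal X, isClosed_diagonal.isCompact, hopen.mem_nhdsSet.2 subset_rfl, ?_, ?_⟩
  · rw [hopen.interior_eq]
    exact fun p hp => f.injective hp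
  · ext ⟨x, y⟩
    simp only [Homeomorph.prodCongr_symm, Homeomorph.coe_prodCongr, Prod.map_iterate,
      Set.mem_ofPred_eq, Set.mem_diagonal_iff, Prod.map_apply]
    exact ⟨fun h => by simpa using (h 0).1, by rintro rfl; simp⟩
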